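/- Let s ∈ (0,1]. (a) For every ξ ∈ S³: the point (0,ξ) lies in ⋄_{0,s} if and only if ξ⁴ ≤ (1−(s/6)²)/(1+(s/6)²). (b) For every τ ∈ [0,π) and ξ ∈ S³ with cos τ > ξ⁴: if (τ,ξ) ∈ ⋄_{τ,4s} — that is, if ℏ(τ,ξ) ≤ 0 or 𝔰(τ,ξ) ≥ (4s)/6 — then (0,ξ) ∈ ⋄_{0,s}. -/

import Mathlib

/-!
Write `σ = s/6` and `x = ξ⁴`. At `τ = 0`, `𝔰(0,ξ) = √(1 - x²)/(1 + x)` is the tangent of half the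
polar angle of `ξ`, so `𝔰(0,ξ) < σ` exactly when `x > (1 - σ²)/(1 + σ²)`; this gives (a).
For (b), if `x` exceeded that bound then `x > 3/5` (as `σ ≤ 1/2`), `sin τ < √(1 - x²)` because
`cos τ > x ≥ 0`, and so `4σ (cos τ + x) ≤ 2 sin τ + √(1 - x²) < 3σ (1 + x) < 8σx`, which
contradicts `cos τ > x`.
-/

/-- The unit three-sphere in `ℝ⁴` (as the set of `ξ : Fin 4 → ℝ` of unit length,
indexed so that `ξ 3 = ξ⁴`). -/
def sphere3 : Set (Fin 4 → ℝ) := {ξ | (ξ 0) ^ 2 + (ξ 1) ^ 2 + (ξ 2) ^ 2 + (ξ 3) ^ 2 = 1}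

/-- `h(τ,ξ) = cos τ - ξ⁴`. -/
noncomputable def hfun (p : ℝ × (Fin 4 → ℝ)) : ℝ := Real.cos p.1 - p.2 3

/-- `ℏ(τ,ξ) = cos τ + ξ⁴`. -/
noncomputable def hbarfun (p : ℝ × (Fin 4 → ℝ)) : ℝ := Real.cos p.1 + p.2 3

/-- `𝔰(τ,ξ) = (2 sin τ + √(1 - (ξ⁴)²)) / ℏ(τ,ξ)`. -/
noncomputable def sfun (p : ℝ × (Fin 4 → ℝ)) : ℝ :=
  (2 * Real.sin p.1 + Real.sqrt (1 - (p.2 3) ^ 2)) / hbarfun p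

/-- The future half of the Minkowski diamond,
`⋄₊ = {(τ,ξ) ∈ [0,π) × S³ : h(τ,ξ) > 0}`. -/
def diamondPlus : Set (ℝ × (Fin 4 → ℝ)) :=
  {p | p.2 ∈ sphere3 ∧ 0 ≤ p.1 ∧ p.1 < Real.pi ∧ 0 < hfun p}

/-- `Δ_{<r} = {(τ,ξ) ∈ ⋄₊ : ℏ(τ,ξ) > 0 and 𝔰(τ,ξ) < r}`. -/
noncomputable def deltaLT (r : ℝ) : Set (ℝ × (Fin 4 → ℝ)) :=
  {p ∈ diamondPlus | 0 < hbarfun p ∧ sfun p < r}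

/-- `⋄ₛ = ⋄₊ \ Δ_{<s/6}`. -/
noncomputable def diamondS (s : ℝ) : Set (ℝ × (Fin 4 → ℝ)) := diamondPlus \ deltaLT (s / 6)

/-- `⋄_{τ,s} = ({τ} × S³) ∩ ⋄ₛ`. -/
noncomputable def diamondTauS (τ s : ℝ) : Set (ℝ × (Fin 4 → ℝ)) :=
  ({τ} ×ˢ (Set.univ : Set (Fin 4 → ℝ))) ∩ diamondS s

open Real

lemma sqrt_one_sub_sq_div_lt_iff {x σ : ℝ} (hx : -1 < x) (hσ : 0 < σ) :
    √(1 - x ^ 2) / (1 + x) < σ ↔ (1 - σ ^ 2) / (1 + σ ^ 2) < x := by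
  have h1x : 0 < 1 + x := by linarith
  have hfactor : (σ * (1 + x)) ^ 2 - (1 - x ^ 2) = (1 + x) * (x * (1 + σ ^ 2) - (1 - σ ^ 2)) := by
    ring
  rw [div_lt_iff₀ h1x, sqrt_lt' (by positivity), div_lt_iff₀ (by positivity), ← sub_pos,
    hfactor, mul_pos_iff_of_pos_left h1x, sub_pos]

lemma mem_diamondTauS_zero_iff {s : ℝ} {ξ : Fin 4 → ℝ} (hξ : ξ ∈ sphere3) :
    ((0 : ℝ), ξ) ∈ diamondTauS 0 s ↔
      ξ 3 < 1 ∧ (0 < 1 + ξ 3 → s / 6 ≤ √(1 - ξ 3 ^ 2) / (1 + ξ 3)) := by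
  simp only [diamondTauS, diamondS, diamondPlus, hfun, sub_pos, deltaLT, Set.mem_ofPred_eq,
    hbarfun, sfun, Set.mem_inter_iff, Set.mem_prod, Set.mem_singleton_iff, Set.mem_univ, and_self,
    Set.mem_sdiff, hξ, le_refl, pi_pos, cos_zero, true_and, sin_zero, mul_zero, zero_add, not_and,
    not_lt, and_congr_right_iff, Classical.imp_iff_right_iff]
  exact fun hx => .inl hx

theorem mem_diamondTauS_zero_iff_le {s : ℝ} (hs : 0 < s) {ξ : Fin 4 → ℝ} (hξ : ξ ∈ sphere3) :
    ((0 : ℝ), ξ) ∈ diamondTauS 0 s ↔ ξ 3 ≤ (1 - (s / 6) ^ 2) / (1 + (s / 6) ^ 2) := by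
  have hσ : 0 < s / 6 := by positivity
  have hlt_one : (1 - (s / 6) ^ 2) / (1 + (s / 6) ^ 2) < 1 := by
    rw [div_lt_one (by positivity)]; nlinarith
  have hgt_neg_one : -1 < (1 - (s / 6) ^ 2) / (1 + (s / 6) ^ 2) := by
    rw [lt_div_iff₀ (by positivity)]; linarith
  rw [mem_diamondTauS_zero_iff hξ]
  constructor
  · rintro ⟨-, hσ_le⟩
    by_contra! hgt
    have hx : 0 < 1 + ξ 3 := by linarith
    exact (hσ_le hx).not_gt ((sqrt_one_sub_sq_div_lt_iff (by linarith) hσ).2 hgt)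
  · intro hle
    refine ⟨by linarith, fun hx => not_lt.1 fun hlt => ?_⟩
    exact ((sqrt_one_sub_sq_div_lt_iff (by linarith) hσ).1 hlt).not_ge hle

lemma sin_lt_sqrt_one_sub_sq {τ x : ℝ} (hτ0 : 0 ≤ τ) (hτπ : τ ≤ π) (hx : 0 ≤ x)
    (hxc : x < cos τ) : sin τ < √(1 - x ^ 2) := by
  rw [sin_eq_sqrt_one_sub_cos_sq hτ0 hτπ]
  exact sqrt_lt_sqrt (by nlinarith [cos_sq_le_one τ]) (by nlinarith)

lemma le_of_four_mul_le_sfun {σ τ : ℝ} {ξ : Fin 4 → ℝ} (hσ0 : 0 < σ) (hσ1 : σ ≤ 1 / 2)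
    (hτ0 : 0 ≤ τ) (hτπ : τ ≤ π) (hxc : ξ 3 < cos τ) (hsf : 4 * σ ≤ sfun (τ, ξ)) :
    ξ 3 ≤ (1 - σ ^ 2) / (1 + σ ^ 2) := by
  set x := ξ 3
  by_contra! hcx
  have hx : 3 / 5 < x :=
    lt_of_le_of_lt (by rw [le_div_iff₀ (by positivity)]; nlinarith) hcx
  have hr : √(1 - x ^ 2) < σ * (1 + x) := by
    rw [← div_lt_iff₀ (by linarith)]
    exact (sqrt_one_sub_sq_div_lt_iff (by linarith) hσ0).2 hcx
  have hsin : sin τ < √(1 - x ^ 2) := sin_lt_sqrt_one_sub_sq hτ0 hτπ (by linarith) hxc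
  rw [sfun, hbarfun, le_div_iff₀ (by linarith)] at hsf
  have : 3 * (σ * (1 + x)) < 4 * σ * (cos τ + x) := by
    nlinarith [mul_pos hσ0 (sub_pos.2 hxc), mul_pos hσ0 (sub_pos.2 hx)]
  linarith

/-- the equivalence `(eq:D0xi4)` and the implication `(eq:D4s,s)` from the
proof of Lemma 6.6: (a) `(0,ξ) ∈ ⋄_{0,s}` iff `ξ⁴ ≤ (1-(s/6)²)/(1+(s/6)²)`, and
(b) for `τ ∈ [0,π)` and `ξ ∈ S³` with `cos τ > ξ⁴`, if `(τ,ξ) ∈ ⋄_{τ,4s}`, that is, if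
`ℏ(τ,ξ) ≤ 0` or `𝔰(τ,ξ) ≥ (4s)/6`, then `(0,ξ) ∈ ⋄_{0,s}`. -/
theorem stmt6 (s : ℝ) (hs : s ∈ Set.Ioc (0 : ℝ) 1) :
    (∀ ξ ∈ sphere3,
      ((0 : ℝ), ξ) ∈ diamondTauS 0 s ↔ ξ 3 ≤ (1 - (s / 6) ^ 2) / (1 + (s / 6) ^ 2)) ∧
    (∀ τ : ℝ, ∀ ξ : Fin 4 → ℝ, 0 ≤ τ → τ < Real.pi → ξ ∈ sphere3 → ξ 3 < Real.cos τ →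
      (hbarfun (τ, ξ) ≤ 0 ∨ 4 * s / 6 ≤ sfun (τ, ξ)) →
      ((0 : ℝ), ξ) ∈ diamondTauS 0 s) := by
  obtain ⟨hs0, hs1⟩ := hs
  refine ⟨fun ξ hξ => mem_diamondTauS_zero_iff_le hs0 hξ, ?_⟩
  intro τ ξ hτ0 hτπ hξ hxc hτξ
  rw [mem_diamondTauS_zero_iff_le hs0 hξ]
  rcases hτξ with hbar | hsf
  · have hx : ξ 3 < 0 := by rw [hbarfun] at hbar; linarith
    have hbound : 0 ≤ (1 - (s / 6) ^ 2) / (1 + (s / 6) ^ 2) :=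
      div_nonneg (by nlinarith) (by positivity)
    linarith
  · exact le_of_four_mul_le_sfun (by positivity) (by linarith) hτ0 hτπ.le hxc
      (by rwa [mul_div_assoc] at hsf)
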